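/- There exists a triangle ABC with angles ∠A = 12°, ∠C = 36°, ∠B = 132° in which the external angle bisectors from A and from B both have length equal to side AB. -/

import Mathlib

/-!
Put the triangle in `ℂ` with `A = 0`, `B = sin 36°` and `C = sin 48° · e^{12° i}`, the side
lengths being the sines of the opposite angles. The internal bisector at `A` points in direction
`6°`, so the external one points in direction `-84°` and `A₁ = AB · e^{-84° i}`; since
`e^{2ix} - 1 = 2 sin x · e^{i(x + 90°)}`, the vector `A₁ - B` has direction `48°`, that of `BC`.
At `B` the sides point in directions `180°` and `48°`, the external bisector in direction `24°`,
and `B₁ = B + AB · e^{24° i}` lies on `AC` because `1 + e^{2ix} = 2 cos x · e^{ix}`. All angles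
are then differences of arguments, and the configuration is carried to the plane by an isometry.
-/

open EuclideanGeometry Real

noncomputable section

/-- The Euclidean plane. -/
abbrev Pt : Type := EuclideanSpace ℝ (Fin 2)

theorem mem_affineSpan_pair_of_vsub_eq_smul {k V P : Type*} [Field k] [AddCommGroup V]
    [Module k V] [AddTorsor V P] {p q s : P} {v : V} {r₁ r₂ : k} (hr₂ : r₂ ≠ 0)
    (hp : p -ᵥ q = r₁ • v) (hs : s -ᵥ q = r₂ • v) : p ∈ line[k, q, s] := by
  rw [← vsub_vadd p q, vadd_left_mem_affineSpan_pair]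
  exact ⟨r₁ / r₂, by rw [hs, hp, smul_smul, div_mul_cancel₀ _ hr₂]⟩

section Configuration

variable {V P : Type*} [NormedAddCommGroup V] [InnerProductSpace ℝ V] [MetricSpace P]
  [NormedAddTorsor V P]

/- The hypothesis `∠ B A C ≠ π / 2` rules out `B = A` and `C = A`, where `∠` takes this value. -/
theorem affineIndependent_of_angle_ne {A B C : P} (h₀ : ∠ B A C ≠ 0) (hπ : ∠ B A C ≠ π)
    (hright : ∠ B A C ≠ π / 2) : AffineIndependent ℝ ![A, B, C] := by
  rw [affineIndependent_iff_not_collinear_set, Set.insert_comm,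
    collinear_iff_eq_or_eq_or_angle_eq_zero_or_angle_eq_pi]
  rintro (rfl | rfl | h | h)
  · exact hright (angle_self_left _ _)
  · exact hright (angle_self_right _ _)
  · exact h₀ h
  · exact hπ h

def IsBottemaConfiguration (A B C A₁ B₁ : P) : Prop :=
  AffineIndependent ℝ ![A, B, C] ∧
    ∠ B A C = π / 15 ∧ ∠ A C B = π / 5 ∧ ∠ A B C = 11 * π / 15 ∧
    A₁ ∈ affineSpan ℝ ({B, C} : Set P) ∧
    ∠ B A A₁ + ∠ C A A₁ = π ∧
    B₁ ∈ affineSpan ℝ ({A, C} : Set P) ∧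
    ∠ A B B₁ + ∠ C B B₁ = π ∧
    dist A A₁ = dist A B ∧ dist B B₁ = dist A B

theorem IsBottemaConfiguration.map {V₂ P₂ : Type*} [NormedAddCommGroup V₂]
    [InnerProductSpace ℝ V₂] [MetricSpace P₂] [NormedAddTorsor V₂ P₂] {A B C A₁ B₁ : P}
    (h : IsBottemaConfiguration A B C A₁ B₁) (f : P →ᵃⁱ[ℝ] P₂) :
    IsBottemaConfiguration (f A) (f B) (f C) (f A₁) (f B₁) := by
  have map_mem {p q r : P} (hp : p ∈ line[ℝ, q, r]) : f p ∈ line[ℝ, f q, f r] := by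
    simpa [AffineSubspace.map_span, Set.image_pair] using
      AffineSubspace.mem_map_of_mem f.toAffineMap hp
  obtain ⟨hind, hA, hC, hB, hA₁, hA₁', hB₁, hB₁', dA, dB⟩ := h
  simp only [IsBottemaConfiguration, f.angle_map, f.dist_map]
  refine ⟨?_, hA, hC, hB, map_mem hA₁, hA₁', map_mem hB₁, hB₁', dA, dB⟩
  have hind' := hind.map' f.toAffineMap f.injective
  rwa [← FinVec.map_eq] at hind'

end Configuration

namespace Bottema

open Complex

def cis (x : ℝ) : ℂ := exp (x * I)

theorem cis_eq_cos_add_sin_mul_I (x : ℝ) : cis x = Real.cos x + Real.sin x * I := by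
  rw [cis, exp_mul_I]; push_cast; rfl

theorem norm_cis (x : ℝ) : ‖cis x‖ = 1 := norm_exp_ofReal_mul_I x

theorem cis_zero : cis 0 = 1 := by simp [cis]

theorem cis_pi : cis π = -1 := exp_pi_mul_I

theorem cis_sub_pi (x : ℝ) : cis (x - π) = -cis x := by
  rw [cis, ofReal_sub, sub_mul, Complex.exp_sub, exp_pi_mul_I, div_neg, div_one, cis]

theorem sin_smul_cis_sub_sin {x y z : ℝ} (h : x + y = z) :
    Real.sin z • cis y - Real.sin x = Real.sin y • cis z := by
  subst h
  simp only [real_smul, cis_eq_cos_add_sin_mul_I, Real.sin_add, Real.cos_add]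
  push_cast
  linear_combination Complex.sin x * Complex.sin_sq_add_cos_sq y

theorem cis_add_one {x y : ℝ} (h : 2 * x = y) : cis y + 1 = (2 * Real.cos x) • cis x := by
  subst h
  simp only [real_smul, cis_eq_cos_add_sin_mul_I, Real.cos_two_mul, Real.sin_two_mul]
  push_cast
  ring

theorem cis_sub_one {x y z : ℝ} (hy : 2 * x = y) (hz : x + π / 2 = z) :
    cis y - 1 = (2 * Real.sin x) • cis z := by
  subst hy hz
  simp only [real_smul, cis_eq_cos_add_sin_mul_I, Real.cos_two_mul, Real.sin_two_mul,
    Real.cos_add_pi_div_two, Real.sin_add_pi_div_two]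
  push_cast
  linear_combination 2 * Complex.sin_sq_add_cos_sq x

theorem angle_eq_sub_of_vsub_eq {p q r : ℂ} {ρ σ x y : ℝ} (hρ : 0 < ρ) (hσ : 0 < σ)
    (hp : p -ᵥ q = ρ • cis x) (hr : r -ᵥ q = σ • cis y) (hxy : x ≤ y) (hyx : y ≤ x + π) :
    ∠ p q r = y - x := by
  rw [EuclideanGeometry.angle, hp, hr, InnerProductGeometry.angle_smul_left_of_pos _ _ hρ,
    InnerProductGeometry.angle_smul_right_of_pos _ _ hσ, InnerProductGeometry.angle_comm, cis, cis,
    angle_exp_exp, (toIocMod_eq_self _).mpr ⟨by linarith [pi_pos], by linarith⟩,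
    abs_of_nonneg (by linarith)]

theorem dist_eq_of_vsub_eq {p q : ℂ} {ρ x : ℝ} (hρ : 0 ≤ ρ) (h : p -ᵥ q = ρ • cis x) :
    dist p q = ρ := by
  rw [dist_eq_norm_vsub ℂ, h, norm_smul, norm_cis, mul_one, Real.norm_of_nonneg hρ]

theorem isBottemaConfiguration_complex :
    IsBottemaConfiguration (0 : ℂ) (Real.sin (π / 5)) (Real.sin (4 * π / 15) • cis (π / 15))
      (Real.sin (π / 5) • cis (-(7 * π / 15)))
      (Real.sin (π / 5) + Real.sin (π / 5) • cis (2 * π / 15)) := by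
  set A : ℂ := 0
  set ab := Real.sin (π / 5)
  set ac := Real.sin (4 * π / 15)
  set bc := Real.sin (π / 15)
  set B : ℂ := (ab : ℂ)
  set C := ac • cis (π / 15)
  set A₁ := ab • cis (-(7 * π / 15))
  set B₁ := B + ab • cis (2 * π / 15)
  have hπ := pi_pos
  have hab : 0 < ab := Real.sin_pos_of_pos_of_lt_pi (by positivity) (by linarith)
  have hac : 0 < ac := Real.sin_pos_of_pos_of_lt_pi (by positivity) (by linarith)
  have hbc : 0 < bc := Real.sin_pos_of_pos_of_lt_pi (by positivity) (by linarith)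
  have hBA : B -ᵥ A = ab • cis 0 := by simp [A, B, cis_zero]
  have hCA : C -ᵥ A = ac • cis (π / 15) := sub_zero C
  have hA₁A : A₁ -ᵥ A = ab • cis (-(7 * π / 15)) := sub_zero A₁
  have hB₁A : B₁ -ᵥ A = (ab * (2 * Real.cos (π / 15))) • cis (π / 15) := by
    rw [mul_smul, ← cis_add_one (y := 2 * π / 15) (by ring)]
    simp [A, B₁, B, smul_add, add_comm]
  have hAB : A -ᵥ B = ab • cis π := by simp [A, B, cis_pi]
  have hCB : C -ᵥ B = bc • cis (4 * π / 15) := sin_smul_cis_sub_sin (by ring)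
  have hA₁B : A₁ -ᵥ B = (ab * (2 * Real.sin (-(7 * π / 30)))) • cis (4 * π / 15) := by
    rw [mul_smul, ← cis_sub_one (y := -(7 * π / 15)) (by ring) (by ring)]
    simp [A₁, B, smul_sub]
  have hB₁B : B₁ -ᵥ B = ab • cis (2 * π / 15) := add_sub_cancel_left B _
  have hAC : A -ᵥ C = ac • cis (π / 15 - π) := by
    rw [cis_sub_pi, smul_neg, ← hCA, neg_vsub_eq_vsub_rev]
  have hBC : B -ᵥ C = bc • cis (4 * π / 15 - π) := by
    rw [cis_sub_pi, smul_neg, ← hCB, neg_vsub_eq_vsub_rev]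
  have hBAC : ∠ B A C = π / 15 := by
    rw [angle_eq_sub_of_vsub_eq hab hac hBA hCA (by linarith) (by linarith)]; ring
  refine ⟨affineIndependent_of_angle_ne ?_ ?_ ?_, hBAC, ?_, ?_,
    mem_affineSpan_pair_of_vsub_eq_smul hbc.ne' hA₁B hCB, ?_,
    mem_affineSpan_pair_of_vsub_eq_smul hac.ne' hB₁A hCA, ?_, ?_, ?_⟩
  · rw [hBAC]; positivity
  · rw [hBAC]; exact (by linarith : π / 15 < π).ne
  · rw [hBAC]; exact (by linarith : π / 15 < π / 2).ne
  · rw [angle_eq_sub_of_vsub_eq hac hbc hAC hBC (by linarith) (by linarith)]; ring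
  · rw [angle_comm, angle_eq_sub_of_vsub_eq hbc hab hCB hAB (by linarith) (by linarith)]; ring
  · rw [angle_comm B, angle_comm C,
      angle_eq_sub_of_vsub_eq hab hab hA₁A hBA (by linarith) (by linarith),
      angle_eq_sub_of_vsub_eq hab hac hA₁A hCA (by linarith) (by linarith)]
    ring
  · rw [angle_comm A, angle_comm C,
      angle_eq_sub_of_vsub_eq hab hab hB₁B hAB (by linarith) (by linarith),
      angle_eq_sub_of_vsub_eq hab hbc hB₁B hCB (by linarith) (by linarith)]
    ring
  · rw [dist_comm, dist_comm A, dist_eq_of_vsub_eq hab.le hA₁A, dist_eq_of_vsub_eq hab.le hBA]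
  · rw [dist_comm, dist_comm A, dist_eq_of_vsub_eq hab.le hB₁B, dist_eq_of_vsub_eq hab.le hBA]

end Bottema

theorem bottema_example :
    ∃ A B C A₁ B₁ : Pt,
      AffineIndependent ℝ ![A, B, C] ∧
      ∠ B A C = π / 15 ∧ ∠ A C B = π / 5 ∧ ∠ A B C = 11 * π / 15 ∧
      A₁ ∈ affineSpan ℝ ({B, C} : Set Pt) ∧
      ∠ B A A₁ + ∠ C A A₁ = π ∧
      B₁ ∈ affineSpan ℝ ({A, C} : Set Pt) ∧
      ∠ A B B₁ + ∠ C B B₁ = π ∧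
      dist A A₁ = dist A B ∧ dist B B₁ = dist A B :=
  ⟨_, _, _, _, _, Bottema.isBottemaConfiguration_complex.map
    Complex.orthonormalBasisOneI.repr.toLinearIsometry.toAffineIsometry⟩
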